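/- Let μ₀ and μ₁ be probability measures on a measurable space Ω, let Y : Ω → ℝ be a measurable label taking values in {0,1}, let g : Ω → 𝒵 be a measurable feature map into a measurable space 𝒵, let h : 𝒵 → ℝ be measurable taking values in {0,1}, and set Ŷ = h ∘ g. Then err₀(Ŷ) + err₁(Ŷ) ≥ |μ₀{Y = 1} − μ₁{Y = 1}| − dTV(g♯μ₀, g♯μ₁). -/

import Mathlib

open MeasureTheory

/-- Total variation distance between two measures:
the supremum over measurable sets of the absolute difference of the probabilities. -/
noncomputable def dTV {Ω : Type*} [MeasurableSpace Ω] (P Q : Measure Ω) : ℝ :=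
  ⨆ E : {E : Set Ω // MeasurableSet E}, |(P E.1).toReal - (Q E.1).toReal|

/-! Writing `Ŷ = h ∘ g` and `p_a(f) = μ_a{f = 1}`, the triangle inequality splits the base-rate gap
`|p₀(Y) - p₁(Y)|` into `|p₀(Y) - p₀(Ŷ)| + |p₀(Ŷ) - p₁(Ŷ)| + |p₁(Ŷ) - p₁(Y)|`. For `{0,1}`-valued
functions `p_a(f)` is the integral of `f`, so the outer terms are bounded by the errors `err_a(Ŷ)`;
the middle one is `|g♯μ₀ E - g♯μ₁ E|` for the measurable set `E = {h = 1}`, hence at most the total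
variation distance. -/

section ZeroOne

variable {Ω : Type*} [MeasurableSpace Ω] {μ : Measure Ω} {f f' : Ω → ℝ}

lemma integral_eq_measureReal_of_zero_or_one (hf : Measurable f)
    (hf01 : ∀ ω, f ω = 0 ∨ f ω = 1) : ∫ ω, f ω ∂μ = μ.real {ω | f ω = 1} := by
  have hf_ind : f = {ω | f ω = 1}.indicator 1 := by
    funext ω
    rcases hf01 ω with h | h <;> simp [h]
  conv_lhs => rw [hf_ind]
  exact integral_indicator_one (hf (measurableSet_singleton 1))

lemma integrable_of_zero_or_one [IsFiniteMeasure μ] (hf : Measurable f)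
    (hf01 : ∀ ω, f ω = 0 ∨ f ω = 1) : Integrable f μ := by
  refine (integrable_const (1 : ℝ)).mono' hf.aestronglyMeasurable (ae_of_all _ fun ω => ?_)
  rcases hf01 ω with h | h <;> simp [h]

lemma abs_measureReal_sub_le_integral_abs_sub [IsFiniteMeasure μ]
    (hf : Measurable f) (hf' : Measurable f')
    (hf01 : ∀ ω, f ω = 0 ∨ f ω = 1) (hf'01 : ∀ ω, f' ω = 0 ∨ f' ω = 1) :
    |μ.real {ω | f ω = 1} - μ.real {ω | f' ω = 1}| ≤ ∫ ω, |f ω - f' ω| ∂μ := by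
  rw [← integral_eq_measureReal_of_zero_or_one hf hf01,
    ← integral_eq_measureReal_of_zero_or_one hf' hf'01,
    ← integral_sub (integrable_of_zero_or_one hf hf01) (integrable_of_zero_or_one hf' hf'01)]
  exact abs_integral_le_integral_abs

end ZeroOne

lemma abs_measureReal_sub_le_dTV {Ω : Type*} [MeasurableSpace Ω] (P Q : Measure Ω)
    [IsFiniteMeasure P] [IsFiniteMeasure Q] {E : Set Ω} (hE : MeasurableSet E) :
    |P.real E - Q.real E| ≤ dTV P Q := by
  have hbdd : BddAbove (Set.range fun E : {E : Set Ω // MeasurableSet E} =>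
      |(P E.1).toReal - (Q E.1).toReal|) := by
    refine ⟨P.real Set.univ + Q.real Set.univ, ?_⟩
    rintro _ ⟨E, rfl⟩
    change |P.real E.1 - Q.real E.1| ≤ _
    have hP : P.real E.1 ≤ P.real Set.univ := measureReal_mono (Set.subset_univ _)
    have hQ : Q.real E.1 ≤ Q.real Set.univ := measureReal_mono (Set.subset_univ _)
    have hP₀ : 0 ≤ P.real E.1 := measureReal_nonneg
    have hQ₀ : 0 ≤ Q.real E.1 := measureReal_nonneg
    exact abs_sub_le_iff.2 ⟨by linarith, by linarith⟩
  exact le_ciSup hbdd ⟨E, hE⟩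

/-- **Total variation lower bound** (Theorem 3.2, first inequality). For any predictor
`Yhat = h ∘ g` built on top of a feature map `g`, the sum of the group-wise errors
is at least the base-rate gap minus the total variation distance between the
pushforward feature distributions. -/
theorem tv_lower_bound_fair_representation
    {Ω 𝒵 : Type*} [MeasurableSpace Ω] [MeasurableSpace 𝒵]
    (μ₀ μ₁ : Measure Ω) [IsProbabilityMeasure μ₀] [IsProbabilityMeasure μ₁]
    (Y : Ω → ℝ) (g : Ω → 𝒵) (h : 𝒵 → ℝ)
    (hY : Measurable Y) (hg : Measurable g) (hh : Measurable h)
    (hY01 : ∀ ω, Y ω = 0 ∨ Y ω = 1) (hh01 : ∀ z, h z = 0 ∨ h z = 1) :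
    (∫ ω, |Y ω - h (g ω)| ∂μ₀) + (∫ ω, |Y ω - h (g ω)| ∂μ₁) ≥
      |(μ₀ {ω | Y ω = 1}).toReal - (μ₁ {ω | Y ω = 1}).toReal| -
        dTV (Measure.map g μ₀) (Measure.map g μ₁) := by
  have hYhat : Measurable fun ω => h (g ω) := hh.comp hg
  have hYhat01 : ∀ ω, h (g ω) = 0 ∨ h (g ω) = 1 := fun ω => hh01 (g ω)
  have herr₀ := abs_measureReal_sub_le_integral_abs_sub (μ := μ₀) hY hYhat hY01 hYhat01
  have herr₁ := abs_measureReal_sub_le_integral_abs_sub (μ := μ₁) hY hYhat hY01 hYhat01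
  have hE : MeasurableSet {z | h z = 1} := hh (measurableSet_singleton 1)
  have htv : |μ₀.real {ω | h (g ω) = 1} - μ₁.real {ω | h (g ω) = 1}| ≤
      dTV (μ₀.map g) (μ₁.map g) := by
    have := abs_measureReal_sub_le_dTV (μ₀.map g) (μ₁.map g) hE
    rwa [map_measureReal_apply hg hE, map_measureReal_apply hg hE] at this
  have htri := abs_sub_le (μ₀.real {ω | Y ω = 1}) (μ₀.real {ω | h (g ω) = 1})
    (μ₁.real {ω | Y ω = 1})
  have htri' := abs_sub_le (μ₀.real {ω | h (g ω) = 1}) (μ₁.real {ω | h (g ω) = 1})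
    (μ₁.real {ω | Y ω = 1})
  rw [abs_sub_comm (μ₁.real _)] at htri'
  change _ ≥ |μ₀.real {ω | Y ω = 1} - μ₁.real {ω | Y ω = 1}| - _
  linarith
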